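/- Let A be an associative ring with a unit and K ∈ A an invertible element. Then the map T̃_K : A³ → A³, T̃_K(X,Y,Z) = (KXK⁻¹, YK + ZX, Z), satisfies the tetrahedron equation; furthermore T̃_K is bijective, its inverse is the map (X̂,Ŷ,Ẑ) ↦ (K⁻¹X̂K, ŶK⁻¹ − ẐK⁻¹X̂, Ẑ), and this inverse map also satisfies the tetrahedron equation. -/

import Mathlib

/-- `T` acting on factors 1,2,3 of the sixfold Cartesian product `D⁶`. -/
def tetra123 {D : Type*} (T : D × D × D → D × D × D) :
    D × D × D × D × D × D → D × D × D × D × D × D :=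
  fun q =>
    match q with
    | (x, y, z, r, s, t) =>
      ((T (x, y, z)).1, (T (x, y, z)).2.1, (T (x, y, z)).2.2, r, s, t)

/-- `T` acting on factors 1,4,5 of the sixfold Cartesian product `D⁶`. -/
def tetra145 {D : Type*} (T : D × D × D → D × D × D) :
    D × D × D × D × D × D → D × D × D × D × D × D :=
  fun q =>
    match q with
    | (x, y, z, r, s, t) =>
      ((T (x, r, s)).1, y, z, (T (x, r, s)).2.1, (T (x, r, s)).2.2, t)

/-- `T` acting on factors 2,4,6 of the sixfold Cartesian product `D⁶`. -/
def tetra246 {D : Type*} (T : D × D × D → D × D × D) :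
    D × D × D × D × D × D → D × D × D × D × D × D :=
  fun q =>
    match q with
    | (x, y, z, r, s, t) =>
      (x, (T (y, r, t)).1, z, (T (y, r, t)).2.1, s, (T (y, r, t)).2.2)

/-- `T` acting on factors 3,5,6 of the sixfold Cartesian product `D⁶`. -/
def tetra356 {D : Type*} (T : D × D × D → D × D × D) :
    D × D × D × D × D × D → D × D × D × D × D × D :=
  fun q =>
    match q with
    | (x, y, z, r, s, t) =>
      (x, y, (T (z, s, t)).1, r, (T (z, s, t)).2.1, (T (z, s, t)).2.2)

/-- The (Zamolodchikov) tetrahedron equation for a map `T : D³ → D³`. -/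
def IsTetrahedronMap {D : Type*} (T : D × D × D → D × D × D) : Prop :=
  tetra123 T ∘ tetra145 T ∘ tetra246 T ∘ tetra356 T =
    tetra356 T ∘ tetra246 T ∘ tetra145 T ∘ tetra123 T

/-! `T̃_K` satisfies the tetrahedron equation by direct computation in the ring: both sides
send `(x, y, z, r, s, t)` to `(K²xK⁻², Ky + KzxK⁻¹, KzK⁻¹, rK² + tyK + sKx + tzx, sK + tz, t)`.
For the inverse no computation is needed: `(T⁻¹)^{ijk} = (T^{ijk})⁻¹`, so inverting both sides of
`T¹²³ T¹⁴⁵ T²⁴⁶ T³⁵⁶ = T³⁵⁶ T²⁴⁶ T¹⁴⁵ T¹²³` reverses the order of the factors and yields the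
tetrahedron equation for `T⁻¹`. -/

section Inverse

variable {D : Type*} {S T : D × D × D → D × D × D}

theorem Function.LeftInverse.tetra123 (h : Function.LeftInverse S T) :
    Function.LeftInverse (tetra123 S) (tetra123 T) := by
  rintro ⟨x, y, z, r, s, t⟩
  simp [_root_.tetra123, h _]

theorem Function.LeftInverse.tetra145 (h : Function.LeftInverse S T) :
    Function.LeftInverse (tetra145 S) (tetra145 T) := by
  rintro ⟨x, y, z, r, s, t⟩
  simp [_root_.tetra145, h _]

theorem Function.LeftInverse.tetra246 (h : Function.LeftInverse S T) :
    Function.LeftInverse (tetra246 S) (tetra246 T) := by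
  rintro ⟨x, y, z, r, s, t⟩
  simp [_root_.tetra246, h _]

theorem Function.LeftInverse.tetra356 (h : Function.LeftInverse S T) :
    Function.LeftInverse (tetra356 S) (tetra356 T) := by
  rintro ⟨x, y, z, r, s, t⟩
  simp [_root_.tetra356, h _]

theorem IsTetrahedronMap.of_leftInverse_of_rightInverse (hT : IsTetrahedronMap T)
    (hl : Function.LeftInverse S T) (hr : Function.RightInverse S T) : IsTetrahedronMap S := by
  have hl' : Function.LeftInverse (tetra356 S ∘ tetra246 S ∘ tetra145 S ∘ tetra123 S)
      (tetra123 T ∘ tetra145 T ∘ tetra246 T ∘ tetra356 T) := fun q => by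
    simp only [Function.comp_apply, hl.tetra123 _, hl.tetra145 _, hl.tetra246 _, hl.tetra356 _]
  have hr' : Function.RightInverse (tetra123 S ∘ tetra145 S ∘ tetra246 S ∘ tetra356 S)
      (tetra356 T ∘ tetra246 T ∘ tetra145 T ∘ tetra123 T) := fun q => by
    simp only [Function.comp_apply, hr.tetra123 _, hr.tetra145 _, hr.tetra246 _, hr.tetra356 _]
  rw [← hT] at hr'
  exact (hl'.eq_rightInverse hr').symm

end Inverse

section RingTetraMap

variable {A : Type*}

/-- The map `T̃_K`. -/
def ringTetraMap [Semiring A] (K : Aˣ) (p : A × A × A) : A × A × A :=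
  ((K : A) * p.1 * ((K⁻¹ : Aˣ) : A), p.2.1 * (K : A) + p.2.2 * p.1, p.2.2)

def ringTetraMapInv [Ring A] (K : Aˣ) (p : A × A × A) : A × A × A :=
  (((K⁻¹ : Aˣ) : A) * p.1 * (K : A),
    p.2.1 * ((K⁻¹ : Aˣ) : A) - p.2.2 * ((K⁻¹ : Aˣ) : A) * p.1, p.2.2)

theorem ringTetraMap_isTetrahedronMap [Semiring A] (K : Aˣ) :
    IsTetrahedronMap (ringTetraMap K) := by
  funext ⟨x, y, z, r, s, t⟩
  simp only [Function.comp_apply, tetra123, tetra145, tetra246, tetra356, ringTetraMap,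
    Prod.mk.injEq]
  refine ⟨trivial, ?_, trivial, ?_, trivial⟩
  · simp only [mul_add, add_mul, mul_assoc, Units.inv_mul, Units.mul_inv, Units.inv_mul_cancel_left,
      mul_one]
  · simp only [mul_add, add_mul, mul_assoc, Units.inv_mul, mul_one]
    abel

theorem ringTetraMapInv_leftInverse [Ring A] (K : Aˣ) :
    Function.LeftInverse (ringTetraMapInv K) (ringTetraMap K) := by
  rintro ⟨x, y, z⟩
  simp [ringTetraMap, ringTetraMapInv, mul_assoc, add_mul]

theorem ringTetraMapInv_rightInverse [Ring A] (K : Aˣ) :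
    Function.RightInverse (ringTetraMapInv K) (ringTetraMap K) := by
  rintro ⟨x, y, z⟩
  simp [ringTetraMap, ringTetraMapInv, mul_assoc, sub_mul]

end RingTetraMap

theorem stmt_6 {A : Type*} [Ring A] (K : Aˣ) :
    IsTetrahedronMap (fun p : A × A × A =>
      ((K : A) * p.1 * ((K⁻¹ : Aˣ) : A), p.2.1 * (K : A) + p.2.2 * p.1, p.2.2)) ∧
    Function.Bijective (fun p : A × A × A =>
      ((K : A) * p.1 * ((K⁻¹ : Aˣ) : A), p.2.1 * (K : A) + p.2.2 * p.1, p.2.2)) ∧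
    Function.LeftInverse
      (fun p : A × A × A =>
        (((K⁻¹ : Aˣ) : A) * p.1 * (K : A), p.2.1 * ((K⁻¹ : Aˣ) : A) - p.2.2 * ((K⁻¹ : Aˣ) : A) * p.1, p.2.2))
      (fun p : A × A × A =>
        ((K : A) * p.1 * ((K⁻¹ : Aˣ) : A), p.2.1 * (K : A) + p.2.2 * p.1, p.2.2)) ∧
    Function.RightInverse
      (fun p : A × A × A =>
        (((K⁻¹ : Aˣ) : A) * p.1 * (K : A), p.2.1 * ((K⁻¹ : Aˣ) : A) - p.2.2 * ((K⁻¹ : Aˣ) : A) * p.1, p.2.2))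
      (fun p : A × A × A =>
        ((K : A) * p.1 * ((K⁻¹ : Aˣ) : A), p.2.1 * (K : A) + p.2.2 * p.1, p.2.2)) ∧
    IsTetrahedronMap (fun p : A × A × A =>
      (((K⁻¹ : Aˣ) : A) * p.1 * (K : A), p.2.1 * ((K⁻¹ : Aˣ) : A) - p.2.2 * ((K⁻¹ : Aˣ) : A) * p.1, p.2.2)) := by
  have hT := ringTetraMap_isTetrahedronMap K
  have hl := ringTetraMapInv_leftInverse K
  have hr := ringTetraMapInv_rightInverse K
  exact ⟨hT, ⟨hl.injective, hr.surjective⟩, hl, hr, hT.of_leftInverse_of_rightInverse hl hr⟩
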